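/- arXiv:1005.4033 — 2 statements merged into one kernel-verified Lean document; each statement's English description precedes it below -/
import Mathlib

section
/- Let x,y ∈ Σ^n and B : Σ → (Σ')^{n'}, with λ_B = max over distinct a,b ∈ Σ of lcs(B(a),B(b))/n'. Then lcs(x ⊛ B, y ⊛ B) ≤ n'·lcs(x,y) + 4nn'·√λ_B. -/
/-!
Fix a longest common subsequence `z` of `x ⊛ B` and `y ⊛ B`. Cutting `z` once along the blocks
of `x ⊛ B` and once along the blocks of `y ⊛ B` splits it into cells `(i, j)`, each a common
subsequence of `B (x i)` and `B (y j)`. The non-empty cells form a chain in the product order, so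
there are at most `2n` of them, and every row and every column of cells holds at most `n'`
letters. Cells of size at most `√λ n'` contribute at most `2n n' √λ`. A larger cell exceeds
`λ n'` (when `λ ≤ 1`), so it pairs equal letters `x i = y j`; greedily removing the row or the
column of the least heavy cell covers the heavy cells by `L` lines, where `L` is the length of a
strictly increasing chain of heavy cells, i.e. of a common subsequence of `x` and `y`. Hence the
heavy cells contribute at most `n' lcs(x, y)`. When `λ > 1` the bound is trivial.
-/

namespace EditDist

variable {α : Type*}

/-- `Chain R k x y` means `x` can be transformed into `y` by exactly `k` steps of `R`. -/
def Chain (R : List α → List α → Prop) : ℕ → List α → List α → Prop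
  | 0, x, y => x = y
  | k+1, x, y => ∃ z, R x z ∧ Chain R k z y

/-- one character insertion -/
def InsStep (x y : List α) : Prop := ∃ (p s : List α) (a : α), x = p ++ s ∧ y = p ++ a :: s

/-- one character deletion -/
def DelStep (x y : List α) : Prop := InsStep y x

/-- one character substitution -/
def SubStep (x y : List α) : Prop := ∃ (p s : List α) (a b : α), x = p ++ a :: s ∧ y = p ++ b :: s

/-- edit distance with insertions and deletions only -/
noncomputable def edd (x y : List α) : ℕ :=
  sInf {k | Chain (fun u v => InsStep u v ∨ DelStep u v) k x y}

/-- the usual edit distance: insertions, deletions and substitutions -/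
noncomputable def ed (x y : List α) : ℕ :=
  sInf {k | Chain (fun u v => InsStep u v ∨ DelStep u v ∨ SubStep u v) k x y}

/-- length of a longest common subsequence -/
noncomputable def lcs (x y : List α) : ℕ :=
  sSup {k | ∃ z : List α, z.length = k ∧ z.Sublist x ∧ z.Sublist y}

end EditDist

open EditDist

/-- substitution product of a string with a block map: replace each character `a` by `B a`. -/
def sprod {σ σ' : Type*} {n : ℕ} (x : Fin n → σ) (B : σ → List σ') : List σ' :=
  (List.ofFn x).flatMap B

namespace EditDist

variable {α : Type*}

theorem bddAbove_setOf_commonSublist_length (u v : List α) :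
    BddAbove {k | ∃ z : List α, z.length = k ∧ z.Sublist u ∧ z.Sublist v} :=
  ⟨u.length, fun _ ⟨_, hz, hzu, _⟩ => hz ▸ hzu.length_le⟩

theorem le_lcs {u v z : List α} (hu : z.Sublist u) (hv : z.Sublist v) : z.length ≤ lcs u v :=
  le_csSup (bddAbove_setOf_commonSublist_length u v) ⟨z, rfl, hu, hv⟩

theorem exists_sublist_length_eq_lcs (u v : List α) :
    ∃ z : List α, z.length = lcs u v ∧ z.Sublist u ∧ z.Sublist v :=
  Nat.sSup_mem (s := {k | ∃ z : List α, z.length = k ∧ z.Sublist u ∧ z.Sublist v})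
    ⟨0, [], rfl, List.nil_sublist _, List.nil_sublist _⟩ (bddAbove_setOf_commonSublist_length u v)

theorem lcs_mono {u u' v v' : List α} (hu : u.Sublist u') (hv : v.Sublist v') :
    lcs u v ≤ lcs u' v' := by
  obtain ⟨z, hz, hzu, hzv⟩ := exists_sublist_length_eq_lcs u v
  exact hz ▸ le_lcs (hzu.trans hu) (hzv.trans hv)

end EditDist

namespace List

variable {α : Type*}

theorem Sublist.exists_eq_flatten_ofFn {n : ℕ} {U : Fin n → List α} {z : List α}
    (h : z <+ (ofFn U).flatten) :
    ∃ zs : Fin n → List α, z = (ofFn zs).flatten ∧ ∀ i, zs i <+ U i := by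
  induction n generalizing z with
  | zero => exact ⟨Fin.elim0, by simpa using h, fun i => i.elim0⟩
  | succ n ih =>
    rw [ofFn_succ, flatten_cons, sublist_append_iff] at h
    obtain ⟨z₁, z₂, rfl, h₁, h₂⟩ := h
    obtain ⟨zs, rfl, hzs⟩ := ih h₂
    exact ⟨Fin.cons z₁ zs, by simp [ofFn_succ], Fin.cases h₁ hzs⟩

theorem drop_take_isInfix_drop_take (z : List α) {a a' b b' : ℕ} (ha : a ≤ a') (hb : b' ≤ b) :
    (z.take b').drop a' <:+: (z.take b).drop a :=
  ((take_prefix_take_left hb).drop a').isInfix.trans (drop_suffix_drop_left _ ha).isInfix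

theorem Pairwise.map_sublist_ofFn {n : ℕ} (f : Fin n → α) {is : List (Fin n)}
    (h : is.Pairwise (· < ·)) : is.map f <+ ofFn f := by
  have := map_getElem_sublist (l := ofFn f) (is := is.map (Fin.cast length_ofFn.symm))
    (pairwise_map.2 h)
  simpa [map_map, Function.comp_def] using this

end List

theorem Finset.exists_forall_le_of_isChain {β : Type*} [PartialOrder β] {H : Finset β}
    (hH : IsChain (· ≤ ·) (H : Set β)) (hne : H.Nonempty) : ∃ p ∈ H, ∀ q ∈ H, p ≤ q := by
  obtain ⟨p, hp⟩ := H.exists_minimal hne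
  refine ⟨p, hp.prop, fun q hq => ?_⟩
  rcases eq_or_ne p q with rfl | hpq
  · exact le_rfl
  · exact (hH hp.prop hq hpq).elim id (hp.2 hq)

section ProdChain

variable {ι κ : Type*} [LinearOrder ι] [LinearOrder κ]

theorem isChain_of_lt_imp_le {S : Set (ι × κ)} (h : ∀ p ∈ S, ∀ q ∈ S, p.1 < q.1 → p.2 ≤ q.2) :
    IsChain (· ≤ ·) S := by
  intro p hp q hq _
  rcases lt_trichotomy p.1 q.1 with hpq | hpq | hpq
  · exact Or.inl ⟨hpq.le, h p hp q hq hpq⟩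
  · exact (le_total p.2 q.2).imp (fun h₂ => ⟨hpq.le, h₂⟩) (fun h₂ => ⟨hpq.ge, h₂⟩)
  · exact Or.inr ⟨hpq.le, h q hq p hp hpq⟩

theorem IsChain.forall_fst_eq_or_forall_snd_eq {H : Set (ι × κ)} (hH : IsChain (· ≤ ·) H)
    {p₀ : ι × κ} (hle : ∀ q ∈ H, p₀ ≤ q) :
    (∀ q ∈ H, ¬(p₀.1 < q.1 ∧ p₀.2 < q.2) → q.1 = p₀.1) ∨
      (∀ q ∈ H, ¬(p₀.1 < q.1 ∧ p₀.2 < q.2) → q.2 = p₀.2) := by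
  have hline : ∀ q ∈ H, ¬(p₀.1 < q.1 ∧ p₀.2 < q.2) → q.1 = p₀.1 ∨ q.2 = p₀.2 :=
    fun q hq hnlt => by
      obtain ⟨h₁, h₂⟩ := hle q hq
      by_contra!
      exact hnlt ⟨lt_of_le_of_ne h₁ this.1.symm, lt_of_le_of_ne h₂ this.2.symm⟩
  by_contra hcon
  simp only [not_or, not_forall, exists_prop] at hcon
  obtain ⟨⟨a, ha, hna, ha₁⟩, ⟨b, hb, hnb, hb₂⟩⟩ := hcon
  have ha₂ := (hline a ha hna).resolve_left ha₁
  have hb₁ := (hline b hb hnb).resolve_right hb₂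
  rcases hH.total ha hb with hab | hba
  · exact ha₁ (le_antisymm (hab.1.trans hb₁.le) (hle a ha).1)
  · exact hb₂ (le_antisymm (hba.2.trans ha₂.le) (hle b hb).2)

theorem exists_pairwise_lt_sum_le_mul_length (c : ι × κ → ℕ) (k : ℕ) (H : Finset (ι × κ))
    (hH : IsChain (· ≤ ·) (H : Set (ι × κ)))
    (hrow : ∀ i, ∑ p ∈ H with p.1 = i, c p ≤ k) (hcol : ∀ j, ∑ p ∈ H with p.2 = j, c p ≤ k) :
    ∃ l : List (ι × κ), (∀ p ∈ l, p ∈ H) ∧ l.Pairwise (fun p q => p.1 < q.1 ∧ p.2 < q.2) ∧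
      ∑ p ∈ H, c p ≤ k * l.length := by
  induction H using Finset.strongInduction with
  | H H ih =>
  rcases H.eq_empty_or_nonempty with rfl | hne
  · exact ⟨[], by simp, List.Pairwise.nil, by simp⟩
  obtain ⟨p₀, hp₀, hle⟩ := Finset.exists_forall_le_of_isChain hH hne
  have hline : ∑ p ∈ H with ¬(p₀.1 < p.1 ∧ p₀.2 < p.2), c p ≤ k := by
    rcases hH.forall_fst_eq_or_forall_snd_eq hle with hfst | hsnd
    · refine le_trans (Finset.sum_le_sum_of_subset fun q hq => ?_) (hrow p₀.1)
      obtain ⟨hqH, hq⟩ := Finset.mem_filter.1 hq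
      exact Finset.mem_filter.2 ⟨hqH, hfst q hqH hq⟩
    · refine le_trans (Finset.sum_le_sum_of_subset fun q hq => ?_) (hcol p₀.2)
      obtain ⟨hqH, hq⟩ := Finset.mem_filter.1 hq
      exact Finset.mem_filter.2 ⟨hqH, hsnd q hqH hq⟩
  have hsub : (H.filter fun q => p₀.1 < q.1 ∧ p₀.2 < q.2) ⊆ H := Finset.filter_subset _ _
  obtain ⟨l, hlH, hl, hsum⟩ := ih (H.filter fun q => p₀.1 < q.1 ∧ p₀.2 < q.2)
    (Finset.filter_ssubset.2 ⟨p₀, hp₀, fun h => lt_irrefl _ h.1⟩) (hH.mono hsub)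
    (fun i => (Finset.sum_le_sum_of_subset (Finset.filter_subset_filter _ hsub)).trans (hrow i))
    (fun j => (Finset.sum_le_sum_of_subset (Finset.filter_subset_filter _ hsub)).trans (hcol j))
  refine ⟨p₀ :: l, ?_,
    List.pairwise_cons.2 ⟨fun q hq => (Finset.mem_filter.1 (hlH q hq)).2, hl⟩, ?_⟩
  · rintro q (_ | ⟨_, hq⟩)
    exacts [hp₀, hsub (hlH q hq)]
  · rw [← Finset.sum_filter_not_add_sum_filter H fun q => p₀.1 < q.1 ∧ p₀.2 < q.2,
      List.length_cons, mul_add_one]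
    omega

end ProdChain

theorem Fintype.sum_filter_fst_eq {ι κ M : Type*} [Fintype ι] [Fintype κ] [DecidableEq ι]
    [AddCommMonoid M] (f : ι × κ → M) (i : ι) : ∑ p with p.1 = i, f p = ∑ j, f (i, j) := by
  rw [Finset.sum_filter, Fintype.sum_prod_type,
    Finset.sum_eq_single i (fun b _ hb => by simp [hb]) (by simp)]
  simp

theorem Fintype.sum_filter_snd_eq {ι κ M : Type*} [Fintype ι] [Fintype κ] [DecidableEq κ]
    [AddCommMonoid M] (f : ι × κ → M) (j : κ) : ∑ p with p.2 = j, f p = ∑ i, f (i, j) := by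
  rw [Finset.sum_filter, Fintype.sum_prod_type]
  simp

theorem card_le_add_of_isChain {n m : ℕ} {S : Finset (Fin n × Fin m)}
    (hS : IsChain (· ≤ ·) (S : Set (Fin n × Fin m))) : S.card ≤ n + m := by
  -- distinct comparable cells have distinct coordinate sums
  refine (Finset.card_le_card_of_injOn (fun p => (p.1 : ℕ) + p.2) (t := Finset.range (n + m))
    (fun p _ => by simp only [Finset.coe_range, Set.mem_Iio]; omega) ?_).trans_eq
    (Finset.card_range _)
  intro p hp q hq hpq
  dsimp only at hpq
  by_contra hne
  rcases hS hp hq hne with ⟨h₁, h₂⟩ | ⟨h₁, h₂⟩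
  all_goals
    simp only [Fin.le_def] at h₁ h₂
    exact hne (Prod.ext (Fin.ext (by omega)) (Fin.ext (by omega)))

namespace EditDist

section Overlap

variable (A C : ℕ → ℕ)

def overlap (i j : ℕ) : ℕ := min (A (i + 1)) (C (j + 1)) - max (A i) (C j)

theorem overlap_comm (i j : ℕ) : overlap A C i j = overlap C A j i := by
  simp only [overlap, min_comm, max_comm]

variable {A C}

theorem sum_range_overlap {n m i : ℕ} (hA : Monotone A) (hC : Monotone C) (h0 : A 0 = C 0)
    (hend : A n = C m) (hi : i < n) :
    ∑ j ∈ Finset.range m, overlap A C i j = A (i + 1) - A i := by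
  -- clamping `C` to `[A i, A (i + 1)]` makes the overlaps telescope
  set clamp : ℕ → ℕ := fun t => max (A i) (min (A (i + 1)) t)
  have hclamp : Monotone (fun j => clamp (C j)) := fun a b hab => by
    have := hC hab
    dsimp only [clamp]
    omega
  have hterm : ∀ j, overlap A C i j = clamp (C (j + 1)) - clamp (C j) := fun j => by
    have := hC (Nat.le_succ j)
    simp only [overlap, clamp]
    omega
  have h₁ := hA (Nat.zero_le i)
  have h₂ := hA (Nat.le_succ i)
  have h₃ := hA (show i + 1 ≤ n from hi)
  rw [Finset.sum_congr rfl fun j _ => hterm j, Finset.sum_range_tsub hclamp]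
  simp only [clamp]
  omega

theorem le_of_overlap_ne_zero (hA : Monotone A) (hC : Monotone C) {i j i' j' : ℕ}
    (h : overlap A C i j ≠ 0) (h' : overlap A C i' j' ≠ 0) (hi : i < i') : j ≤ j' := by
  by_contra! hj
  have := hA (show i + 1 ≤ i' from hi)
  have := hC (show j' + 1 ≤ j from hj)
  simp only [overlap] at h h'
  omega

end Overlap

section BlockStart

variable {n : ℕ} (zs : Fin n → List α)

def blockStart (k : ℕ) : ℕ := (((List.ofFn zs).map List.length).take k).sum

theorem monotone_blockStart : Monotone (blockStart zs) := List.monotone_sum_take _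

@[simp]
theorem blockStart_zero : blockStart zs 0 = 0 := by simp [blockStart]

theorem blockStart_self : blockStart zs n = (List.ofFn zs).flatten.length := by
  rw [List.length_flatten]
  exact congrArg List.sum (List.take_of_length_le (by simp))

theorem drop_take_blockStart (i : Fin n) :
    ((List.ofFn zs).flatten.take (blockStart zs (i + 1))).drop (blockStart zs i) = zs i :=
  (List.drop_take_succ_flatten_eq_getElem _ i (by simp)).trans (by simp)

theorem length_eq_blockStart_sub (i : Fin n) :
    (zs i).length = blockStart zs (i + 1) - blockStart zs i := by
  have := monotone_blockStart zs (show i + 1 ≤ n from i.2)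
  rw [← drop_take_blockStart zs i, List.length_drop, List.length_take, ← blockStart_self]
  omega

theorem sum_overlap_blockStart {m : ℕ} (ws : Fin m → List α)
    (h : (List.ofFn zs).flatten = (List.ofFn ws).flatten) (i : Fin n) :
    ∑ j : Fin m, overlap (blockStart zs) (blockStart ws) i j = (zs i).length := by
  rw [Fin.sum_univ_eq_sum_range (fun j => overlap (blockStart zs) (blockStart ws) i j),
    length_eq_blockStart_sub]
  exact sum_range_overlap (monotone_blockStart zs) (monotone_blockStart ws) (by simp)
    (by rw [blockStart_self, blockStart_self, h]) i.2

theorem overlap_blockStart_le_lcs {m : ℕ} (ws : Fin m → List α)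
    (h : (List.ofFn zs).flatten = (List.ofFn ws).flatten) (i : Fin n) (j : Fin m) :
    overlap (blockStart zs) (blockStart ws) i j ≤ lcs (zs i) (ws j) := by
  set cell := ((List.ofFn zs).flatten.take
    (min (blockStart zs (i + 1)) (blockStart ws (j + 1)))).drop
    (max (blockStart zs i) (blockStart ws j))
  have hcell : cell.length = overlap (blockStart zs) (blockStart ws) i j := by
    have := monotone_blockStart zs (show i + 1 ≤ n from i.2)
    rw [blockStart_self] at this
    simp only [cell, overlap, List.length_drop, List.length_take]
    omega
  have hzs : cell <:+: zs i := by
    have := (List.ofFn zs).flatten.drop_take_isInfix_drop_take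
      (le_max_left (blockStart zs i) (blockStart ws j))
      (min_le_left (blockStart zs (i + 1)) (blockStart ws (j + 1)))
    rwa [drop_take_blockStart] at this
  have hws : cell <:+: ws j := by
    have := (List.ofFn ws).flatten.drop_take_isInfix_drop_take
      (le_max_right (blockStart zs i) (blockStart ws j))
      (min_le_right (blockStart zs (i + 1)) (blockStart ws (j + 1)))
    rwa [drop_take_blockStart, ← h] at this
  exact hcell.symm.trans_le (le_lcs hzs.sublist hws.sublist)

end BlockStart

theorem exists_alignment {n m : ℕ} {U : Fin n → List α} {V : Fin m → List α}
    {z : List α} (hU : z.Sublist (List.ofFn U).flatten) (hV : z.Sublist (List.ofFn V).flatten) :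
    ∃ c : Fin n × Fin m → ℕ, ∑ p, c p = z.length ∧ (∀ i, ∑ j, c (i, j) ≤ (U i).length) ∧
      (∀ j, ∑ i, c (i, j) ≤ (V j).length) ∧ IsChain (· ≤ ·) {p | c p ≠ 0} ∧
      ∀ p, c p ≤ lcs (U p.1) (V p.2) := by
  obtain ⟨zs, hz, hzU⟩ := hU.exists_eq_flatten_ofFn
  obtain ⟨ws, hw, hwV⟩ := hV.exists_eq_flatten_ofFn
  have h : (List.ofFn zs).flatten = (List.ofFn ws).flatten := hz.symm.trans hw
  refine ⟨fun p => overlap (blockStart zs) (blockStart ws) p.1 p.2, ?_, fun i => ?_, fun j => ?_,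
    ?_, fun p => ?_⟩
  · simp only [Fintype.sum_prod_type, sum_overlap_blockStart zs ws h]
    simp [hz, List.length_flatten, List.sum_ofFn]
  · exact (sum_overlap_blockStart zs ws h i).trans_le (hzU i).length_le
  · simp only [overlap_comm (blockStart zs)]
    exact (sum_overlap_blockStart ws zs h.symm j).trans_le (hwV j).length_le
  · exact isChain_of_lt_imp_le fun p hp q hq hpq =>
      le_of_overlap_ne_zero (monotone_blockStart zs) (monotone_blockStart ws) hp hq hpq
  · exact (overlap_blockStart_le_lcs zs ws h p.1 p.2).trans (lcs_mono (hzU _) (hwV _))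

theorem length_le_lcs_of_pairwise {σ : Type*} {n m : ℕ} (x : Fin n → σ) (y : Fin m → σ)
    {l : List (Fin n × Fin m)} (hl : l.Pairwise (fun p q => p.1 < q.1 ∧ p.2 < q.2))
    (hxy : ∀ p ∈ l, x p.1 = y p.2) : l.length ≤ lcs (List.ofFn x) (List.ofFn y) := by
  have hx := (List.pairwise_map.2 (hl.imp And.left)).map_sublist_ofFn x
  have hy := (List.pairwise_map.2 (hl.imp And.right)).map_sublist_ofFn y
  have hw : (l.map Prod.fst).map x = (l.map Prod.snd).map y := by
    simp only [List.map_map]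
    exact List.map_congr_left hxy
  simpa using le_lcs hx (hw ▸ hy)

theorem sum_le_mul_lcs_add {σ : Type*} {n m k : ℕ} (x : Fin n → σ) (y : Fin m → σ)
    (c : Fin n × Fin m → ℕ) {θ : ℝ} (hθ : 0 ≤ θ)
    (hrow : ∀ i, ∑ j, c (i, j) ≤ k) (hcol : ∀ j, ∑ i, c (i, j) ≤ k)
    (hchain : IsChain (· ≤ ·) {p | c p ≠ 0}) (hheavy : ∀ p, θ < c p → x p.1 = y p.2) :
    (∑ p, c p : ℝ) ≤ k * lcs (List.ofFn x) (List.ofFn y) + (n + m) * θ := by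
  set H := Finset.univ.filter fun p => θ < c p
  have hHsupp : (H : Set (Fin n × Fin m)) ⊆ {p | c p ≠ 0} := fun p hp h0 => by
    simp [H, h0] at hp
    linarith
  obtain ⟨l, hlH, hl, hHsum⟩ := exists_pairwise_lt_sum_le_mul_length c k H (hchain.mono hHsupp)
    (fun i => ((Finset.sum_le_sum_of_subset (Finset.filter_subset_filter _ H.subset_univ)).trans_eq
      (Fintype.sum_filter_fst_eq c i)).trans (hrow i))
    (fun j => ((Finset.sum_le_sum_of_subset (Finset.filter_subset_filter _ H.subset_univ)).trans_eq
      (Fintype.sum_filter_snd_eq c j)).trans (hcol j))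
  have hl_lcs := length_le_lcs_of_pairwise x y hl fun p hp =>
    hheavy p (Finset.mem_filter.1 (hlH p hp)).2
  have hheavy_sum : (∑ p ∈ H, c p : ℝ) ≤ k * lcs (List.ofFn x) (List.ofFn y) := by
    exact_mod_cast hHsum.trans (Nat.mul_le_mul_left k hl_lcs)
  have hlight_sum : (∑ p ∈ Finset.univ.filter fun p => ¬θ < c p, (c p : ℝ)) ≤ (n + m) * θ := by
    calc (∑ p ∈ Finset.univ.filter fun p => ¬θ < c p, (c p : ℝ))
        ≤ ∑ p ∈ Finset.univ.filter fun p => c p ≠ 0, θ := by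
          rw [Finset.sum_filter, Finset.sum_filter]
          refine Finset.sum_le_sum fun p _ => ?_
          split_ifs with h₁ h₂ h₂ <;> simp_all
      _ ≤ (n + m) * θ := by
          rw [Finset.sum_const, nsmul_eq_mul]
          refine mul_le_mul_of_nonneg_right ?_ hθ
          exact_mod_cast card_le_add_of_isChain (by simpa using hchain)
  rw [← Finset.sum_filter_add_sum_filter_not Finset.univ fun p => θ < c p]
  linarith

end EditDist

theorem sprod_eq_flatten_ofFn {σ σ' : Type*} {n : ℕ} (x : Fin n → σ) (B : σ → List σ') :
    sprod x B = (List.ofFn (B ∘ x)).flatten := by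
  rw [sprod, List.flatMap_def, List.map_ofFn]

theorem stmt6_general {σ σ' : Type*} {n n' : ℕ} (x y : Fin n → σ)
    (B : σ → List σ') (hB : ∀ a, (B a).length = n')
    (lam : ℝ)
    (hlam : ∀ a b : σ, a ≠ b → (lcs (B a) (B b) : ℝ) ≤ lam * n') :
    (lcs (sprod x B) (sprod y B) : ℝ) ≤
      (n' : ℝ) * lcs (List.ofFn x) (List.ofFn y) + 4 * n * n' * Real.sqrt lam := by
  obtain ⟨z, hz, hzx, hzy⟩ := exists_sublist_length_eq_lcs (sprod x B) (sprod y B)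
  rw [← hz]
  rw [sprod_eq_flatten_ofFn] at hzx hzy
  rcases le_or_gt lam 1 with hlam1 | hlam1
  · obtain ⟨c, hsum, hrow, hcol, hchain, hcell⟩ := exists_alignment hzx hzy
    have hheavy : ∀ p, √lam * n' < c p → x p.1 = y p.2 := fun p hp => by
      by_contra hne
      have := hlam _ _ hne
      have : lam * n' ≤ √lam * n' :=
        mul_le_mul_of_nonneg_right (Real.le_sqrt_self_iff.2 hlam1) (Nat.cast_nonneg _)
      have : (c p : ℝ) ≤ lcs (B (x p.1)) (B (y p.2)) := by exact_mod_cast hcell p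
      linarith
    have := sum_le_mul_lcs_add x y c (by positivity) (fun i => (hrow i).trans_eq (hB _))
      (fun j => (hcol j).trans_eq (hB _)) hchain hheavy
    rw [← hsum]
    push_cast
    nlinarith [show (0 : ℝ) ≤ n * n' * √lam by positivity]
  · have hlen : z.length ≤ n * n' := by
      simpa [List.length_flatten, List.sum_ofFn, hB] using hzx.length_le
    have : (1 : ℝ) < √lam := Real.lt_sqrt_of_sq_lt (by simpa using hlam1)
    have : (z.length : ℝ) ≤ n * n' := by exact_mod_cast hlen
    nlinarith [Nat.cast_nonneg (α := ℝ) (lcs (List.ofFn x) (List.ofFn y))]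

theorem stmt6 {σ σ' : Type*} {n n' : ℕ} (x y : Fin n → σ)
    (B : σ → List σ') (hB : ∀ a, (B a).length = n')
    (lam : ℝ) (hlam0 : 0 ≤ lam)
    (hlam : ∀ a b : σ, a ≠ b → (lcs (B a) (B b) : ℝ) ≤ lam * n') :
    (lcs (sprod x B) (sprod y B) : ℝ) ≤
      (n' : ℝ) * lcs (List.ofFn x) (List.ofFn y) + 4 * n * n' * Real.sqrt lam :=
  stmt6_general x y B hB lam hlam
end

section
/- For every b ≥ 2 and strings x,y ∈ Σ^n with n = b^h, the edit distance ed(x,y) is at most twice the E-distance from x to y, i.e., ed(x,y) ≤ 2·E(0,1,1). -/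
open EditDist

open scoped Classical

/-- The `E`-distance from the paper (0-indexed).  `Edist x y n b k s u` is the `E`-distance of the
substring of `x` of length `b ^ k` starting at position `s` to position `u` of `y` (a string of
length `n`); `k` is the height of the node in the `b`-ary tree, i.e. `k = h - i` for level `i`.
At the leaves it is the Hamming-type cost; at an internal node it is the sum over the `b`
children of the minimum over integer shifts `r` of (child distance at the shifted position)
plus `|r|`. -/
noncomputable def Edist {α : Type*} (x y : ℕ → α) (n b : ℕ) : ℕ → ℕ → ℤ → ℝ
  | 0, s, u => if 0 ≤ u ∧ u < (n : ℤ) ∧ x s = y u.toNat then 0 else 1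
  | k + 1, s, u =>
      ∑ j ∈ Finset.range b,
        ⨅ r : ℤ, (Edist x y n b k (s + j * b ^ k) (u + (j : ℤ) * (b : ℤ) ^ k + r) + |(r : ℝ)|)

namespace EditDist

variable {α : Type*}

-- Reducible, so that `ed x y` is `sInf {k | Chain (EditStep α) k x y}`.
abbrev EditStep (α : Type*) (u v : List α) : Prop := InsStep u v ∨ DelStep u v ∨ SubStep u v

section Chain

variable {R : List α → List α → Prop}

lemma Chain.single {u v : List α} (h : R u v) : Chain R 1 u v := ⟨v, h, rfl⟩

lemma Chain.trans {j k : ℕ} {x y z : List α} (hxy : Chain R j x y) (hyz : Chain R k y z) :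
    Chain R (j + k) x z := by
  induction j generalizing x with
  | zero => cases hxy; simpa using hyz
  | succ j ih =>
    obtain ⟨w, hxw, hwy⟩ := hxy
    rw [Nat.succ_add]
    exact ⟨w, hxw, ih hwy⟩

lemma Chain.map {g : List α → List α} (hg : ∀ u v, R u v → R (g u) (g v)) {k : ℕ}
    {u v : List α} (h : Chain R k u v) : Chain R k (g u) (g v) := by
  induction k generalizing u with
  | zero => cases h; rfl
  | succ k ih =>
    obtain ⟨w, huw, hwv⟩ := h
    exact ⟨g w, hg _ _ huw, ih hwv⟩

lemma Chain.symm (hR : ∀ u v, R u v → R v u) {k : ℕ} {u v : List α} (h : Chain R k u v) :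
    Chain R k v u := by
  induction k generalizing u with
  | zero => cases h; rfl
  | succ k ih =>
    obtain ⟨w, huw, hwv⟩ := h
    simpa using (ih hwv).trans (Chain.single (hR _ _ huw))

end Chain

lemma editStep_symm (u v : List α) : EditStep α u v → EditStep α v u := by
  rintro (h | h | ⟨p, s, a, b, rfl, rfl⟩)
  · exact Or.inr (Or.inl h)
  · exact Or.inl h
  · exact Or.inr (Or.inr ⟨p, s, b, a, rfl, rfl⟩)

lemma editStep_append_left (p : List α) {u v : List α} (h : EditStep α u v) :
    EditStep α (p ++ u) (p ++ v) := by
  rcases h with ⟨q, s, a, rfl, rfl⟩ | ⟨q, s, a, rfl, rfl⟩ | ⟨q, s, a, b, rfl, rfl⟩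
  · exact Or.inl ⟨p ++ q, s, a, by simp, by simp⟩
  · exact Or.inr (Or.inl ⟨p ++ q, s, a, by simp, by simp⟩)
  · exact Or.inr (Or.inr ⟨p ++ q, s, a, b, by simp, by simp⟩)

lemma editStep_append_right (q : List α) {u v : List α} (h : EditStep α u v) :
    EditStep α (u ++ q) (v ++ q) := by
  rcases h with ⟨p, s, a, rfl, rfl⟩ | ⟨p, s, a, rfl, rfl⟩ | ⟨p, s, a, b, rfl, rfl⟩
  · exact Or.inl ⟨p, s ++ q, a, by simp, by simp⟩
  · exact Or.inr (Or.inl ⟨p, s ++ q, a, by simp, by simp⟩)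
  · exact Or.inr (Or.inr ⟨p, s ++ q, a, b, by simp, by simp⟩)

lemma chain_editStep_nil (x : List α) : Chain (EditStep α) x.length x [] := by
  induction x with
  | nil => rfl
  | cons a x ih => exact ⟨x, Or.inr (Or.inl ⟨[], x, a, rfl, rfl⟩), ih⟩

lemma ed_le_of_chain {k : ℕ} {x y : List α} (h : Chain (EditStep α) k x y) : ed x y ≤ k :=
  Nat.sInf_le h

lemma chain_ed (x y : List α) : Chain (EditStep α) (ed x y) x y :=
  Nat.sInf_mem (s := {k | Chain (EditStep α) k x y})
    ⟨_, (chain_editStep_nil x).trans ((chain_editStep_nil y).symm editStep_symm)⟩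

lemma ed_triangle (x y z : List α) : ed x z ≤ ed x y + ed y z :=
  ed_le_of_chain ((chain_ed x y).trans (chain_ed y z))

lemma ed_comm (x y : List α) : ed x y = ed y x :=
  le_antisymm (ed_le_of_chain ((chain_ed y x).symm editStep_symm))
    (ed_le_of_chain ((chain_ed x y).symm editStep_symm))

@[simp] lemma ed_self (x : List α) : ed x x = 0 :=
  Nat.le_zero.mp (ed_le_of_chain (show Chain (EditStep α) 0 x x from rfl))

lemma ed_singleton_le_one (a b : α) : ed [a] [b] ≤ 1 :=
  ed_le_of_chain (Chain.single (Or.inr (Or.inr ⟨[], [], a, b, rfl, rfl⟩)))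

lemma ed_append_le (x x' y y' : List α) : ed (x ++ x') (y ++ y') ≤ ed x y + ed x' y' :=
  ed_le_of_chain (((chain_ed x y).map fun _ _ => editStep_append_right x').trans
    ((chain_ed x' y').map fun _ _ => editStep_append_left y))

lemma ed_append_append_le (x y z : List α) : ed (x ++ y) (y ++ z) ≤ x.length + z.length := by
  calc ed (x ++ y) (y ++ z) ≤ ed (x ++ y) ([] ++ y) + ed (y ++ []) (y ++ z) := by
        simpa using ed_triangle (x ++ y) y (y ++ z)
    _ ≤ (ed x [] + ed y y) + (ed y y + ed [] z) := add_le_add (ed_append_le _ _ _ _)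
        (ed_append_le _ _ _ _)
    _ ≤ x.length + z.length := by
        rw [ed_self, ed_comm [] z]
        simpa using add_le_add (ed_le_of_chain (chain_editStep_nil x))
          (ed_le_of_chain (chain_editStep_nil z))

-- Windows start at an integer so that the shifted positions `u + r` of the `E`-distance make sense.
def window (f : ℤ → α) (u : ℤ) (m : ℕ) : List α :=
  (List.range m).map fun i : ℕ => f (u + i)

@[simp] lemma length_window (f : ℤ → α) (u : ℤ) (m : ℕ) : (window f u m).length = m := by
  simp [window]

lemma window_one (f : ℤ → α) (u : ℤ) : window f u 1 = [f u] := by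
  simp [window]

lemma window_add (f : ℤ → α) (u : ℤ) (m m' : ℕ) :
    window f u (m + m') = window f u m ++ window f (u + m) m' := by
  simp only [window, List.range_add, List.map_append, List.map_map]
  congr 1
  refine List.map_congr_left fun i _ => ?_
  simp only [Function.comp, Nat.cast_add]
  ring_nf

lemma ed_window_mul_le (f g : ℤ → α) (u v : ℤ) (c m : ℕ) :
    ed (window f u (c * m)) (window g v (c * m)) ≤
      ∑ j ∈ Finset.range c,
        ed (window f (u + (j * m : ℕ)) m) (window g (v + (j * m : ℕ)) m) := by
  induction c with
  | zero => simp [window]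
  | succ c ih =>
    rw [Nat.succ_mul, window_add, window_add, Finset.sum_range_succ]
    exact (ed_append_le _ _ _ _).trans (Nat.add_le_add_right ih _)

lemma ed_window_add_natCast_le (f : ℤ → α) (u : ℤ) (m d : ℕ) :
    ed (window f u m) (window f (u + d) m) ≤ 2 * d := by
  rcases le_total m d with hmd | hdm
  · calc ed (window f u m) (window f (u + d) m)
        = ed (window f u m ++ []) ([] ++ window f (u + d) m) := by simp
      _ ≤ 2 * d := (ed_append_append_le _ _ _).trans (by simp; omega)
  · obtain ⟨m, rfl⟩ := Nat.exists_eq_add_of_le hdm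
    calc ed (window f u (d + m)) (window f (u + d) (d + m))
        = ed (window f u d ++ window f (u + d) m)
            (window f (u + d) m ++ window f (u + d + m) d) := by
          rw [window_add, add_comm d m, window_add]
      _ ≤ 2 * d := (ed_append_append_le _ _ _).trans (by simp; omega)

lemma ed_window_add_le (f : ℤ → α) (u r : ℤ) (m : ℕ) :
    ed (window f u m) (window f (u + r) m) ≤ 2 * r.natAbs := by
  obtain ⟨d, rfl | rfl⟩ := Int.eq_nat_or_neg r
  · simpa using ed_window_add_natCast_le f u m d
  · rw [ed_comm]
    simpa using ed_window_add_natCast_le f (u + -d) m d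

lemma ed_le_ed_window_add (w : List α) (f : ℤ → α) (u r : ℤ) (m : ℕ) :
    ed w (window f u m) ≤ ed w (window f (u + r) m) + 2 * r.natAbs := by
  calc ed w (window f u m) ≤ ed w (window f (u + r) m) + ed (window f (u + r) m) (window f u m) :=
        ed_triangle _ _ _
    _ ≤ _ := by
      rw [ed_comm _ (window f u m)]
      exact Nat.add_le_add_left (ed_window_add_le f u r m) _

end EditDist

theorem ed_window_le_two_mul_Edist {α : Type*} (x y : ℕ → α) (n b k s : ℕ) (u : ℤ) :
    (ed (window (fun i => x i.toNat) s (b ^ k)) (window (fun i => y i.toNat) u (b ^ k)) : ℝ) ≤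
      2 * Edist x y n b k s u := by
  induction k generalizing s u with
  | zero =>
    rw [pow_zero, window_one, window_one, Int.toNat_natCast, Edist]
    split_ifs with h
    · simp [h.2.2]
    · exact_mod_cast (ed_singleton_le_one _ _).trans (by norm_num)
  | succ k ih =>
    set X : ℤ → α := fun i => x i.toNat
    set Y : ℤ → α := fun i => y i.toNat
    have hblock (j : ℕ) : (ed (window X ↑(s + j * b ^ k) (b ^ k))
        (window Y (u + j * (b : ℤ) ^ k) (b ^ k)) : ℝ) / 2 ≤
        ⨅ r : ℤ,
          (Edist x y n b k (s + j * b ^ k) (u + j * (b : ℤ) ^ k + r) + |(r : ℝ)|) := by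
      refine le_ciInf fun r => ?_
      have hshift := ed_le_ed_window_add (window X ↑(s + j * b ^ k) (b ^ k)) Y
        (u + j * (b : ℤ) ^ k) r (b ^ k)
      have hsub := ih (s + j * b ^ k) (u + j * (b : ℤ) ^ k + r)
      rw [← Nat.cast_le (α := ℝ)] at hshift
      push_cast [Nat.cast_natAbs] at hshift hsub ⊢
      linarith
    calc (ed (window X s (b ^ (k + 1))) (window Y u (b ^ (k + 1))) : ℝ)
        ≤ ∑ j ∈ Finset.range b, (ed (window X ↑(s + j * b ^ k) (b ^ k))
            (window Y (u + j * (b : ℤ) ^ k) (b ^ k)) : ℝ) := by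
          rw [pow_succ']
          exact_mod_cast (ed_window_mul_le X Y s u b (b ^ k)).trans_eq (by push_cast; rfl)
      _ ≤ ∑ j ∈ Finset.range b, 2 * ⨅ r : ℤ,
            (Edist x y n b k (s + j * b ^ k) (u + j * (b : ℤ) ^ k + r) + |(r : ℝ)|) :=
          Finset.sum_le_sum fun j _ => by linarith [hblock j]
      _ = 2 * Edist x y n b (k + 1) s u := by rw [← Finset.mul_sum]; rfl

theorem stmt14_general {α : Type*} (b h : ℕ) (x y : ℕ → α) :
    ((ed (List.ofFn fun i : Fin (b ^ h) => x i) (List.ofFn fun i : Fin (b ^ h) => y i) : ℝ)) ≤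
      2 * Edist x y (b ^ h) b h 0 0 := by
  have hwindow (z : ℕ → α) :
      (List.ofFn fun i : Fin (b ^ h) => z i) = window (fun i => z i.toNat) 0 (b ^ h) := by
    apply List.ext_getElem <;> simp [window]
  rw [hwindow x, hwindow y]
  exact ed_window_le_two_mul_Edist x y (b ^ h) b h 0 0

theorem stmt14 {α : Type*} (b h : ℕ) (hb : 2 ≤ b) (x y : ℕ → α) :
    ((ed (List.ofFn fun i : Fin (b ^ h) => x i) (List.ofFn fun i : Fin (b ^ h) => y i) : ℝ)) ≤
      2 * Edist x y (b ^ h) b h 0 0 :=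
  stmt14_general b h x y
end
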